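/- arXiv:1506.04140 — 3 statements merged into one kernel-verified Lean document; each statement's English description precedes it below -/
import Mathlib

section
/- Let E be a real Banach space with normalized duality mapping J. For all x, y in E and x* ∈ J(x), y* ∈ J(y), we have ⟨x - y, x* - y*⟩ ≥ (‖x‖ - ‖y‖)² + (‖x‖ + ‖y‖)(‖x‖ + ‖y‖ - ‖x + y‖). -/
/-- The normalized duality mapping `J(x) = {f ∈ E* : ⟨x, f⟩ = ‖x‖² = ‖f‖²}`. -/
def dualityMap {E : Type*} [NormedAddCommGroup E] [NormedSpace ℝ E] (x : E) :
    Set (E →L[ℝ] ℝ) := {f | f x = ‖x‖ ^ 2 ∧ ‖f‖ = ‖x‖}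

theorem stmt_1 {E : Type*} [NormedAddCommGroup E] [NormedSpace ℝ E] [CompleteSpace E]
    (x y : E) (xs ys : E →L[ℝ] ℝ)
    (hx : xs ∈ dualityMap x) (hy : ys ∈ dualityMap y) :
    (xs - ys) (x - y) ≥ (‖x‖ - ‖y‖) ^ 2 + (‖x‖ + ‖y‖) * (‖x‖ + ‖y‖ - ‖x + y‖) := by
  obtain ⟨hx1, hx2⟩ := hx
  obtain ⟨hy1, hy2⟩ := hy
  have key : (xs + ys) (x + y) ≤ (‖x‖ + ‖y‖) * ‖x + y‖ := by
    calc (xs + ys) (x + y) ≤ ‖(xs + ys) (x + y)‖ := le_abs_self _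
      _ ≤ ‖xs + ys‖ * ‖x + y‖ := (xs + ys).le_opNorm _
      _ ≤ (‖xs‖ + ‖ys‖) * ‖x + y‖ := by
          exact mul_le_mul_of_nonneg_right (norm_add_le _ _) (norm_nonneg _)
      _ = (‖x‖ + ‖y‖) * ‖x + y‖ := by rw [hx2, hy2]
  have expand : (xs + ys) (x + y) = ‖x‖ ^ 2 + ‖y‖ ^ 2 + (xs y + ys x) := by
    simp [map_add, hx1, hy1]; ring
  have expand2 : (xs - ys) (x - y) = ‖x‖ ^ 2 + ‖y‖ ^ 2 - (xs y + ys x) := by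
    simp [map_sub, hx1, hy1]; ring
  nlinarith [key, expand, expand2]
end

section
/- Let C be a nonempty convex subset of a real smooth Banach space E, x ∈ E, y ∈ C, and μ a gauge function with duality mapping J_μ. Then ‖x - y‖ = d(x, C) if and only if ⟨y - z, J_μ(x - y)⟩ ≥ 0 for all z ∈ C. -/
/-!
A nearest point `y` of the convex set `C` to `x` is a point where the open ball around `x` of
radius `‖x - y‖` misses `C`, so Hahn–Banach separates the ball from `C` by a functional `f`.
Comparing `f` on the ball with its norm shows that `-f` norms `x - y`, and rescaled it is an
element of `J_μ(x - y)`, hence equal to `jμ (x - y)` by smoothness; that `f` is minimal on `C`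
at `y` is the variational inequality. Conversely, any norming functional of `x - y` that is
nonnegative on `y - z` forces `‖x - y‖ ≤ ‖x - z‖`.
-/

/-- The duality mapping with gauge function `μ`:
`J_μ(x) = {f ∈ E* : ⟨x, f⟩ = ‖x‖‖f‖, ‖f‖ = μ(‖x‖)}`. -/
def gaugeDualityMap {E : Type*} [NormedAddCommGroup E] [NormedSpace ℝ E]
    (μ : ℝ → ℝ) (x : E) : Set (E →L[ℝ] ℝ) :=
  {f | f x = ‖x‖ * ‖f‖ ∧ ‖f‖ = μ ‖x‖}

open Metric

section NormingFunctional

variable {E : Type*} [NormedAddCommGroup E] [NormedSpace ℝ E]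

lemma StrongDual.apply_add_norm_mul_le_of_forall_mem_ball_lt (f : StrongDual ℝ E) {x : E}
    {r s : ℝ} (hr : 0 < r) (h : ∀ a ∈ ball x r, f a < s) : f x + ‖f‖ * r ≤ s := by
  have hclosed : ∀ a ∈ closedBall x r, f a ≤ s := by
    rw [← closure_ball x hr.ne']
    exact closure_minimal (fun a ha => (h a ha).le) (isClosed_le f.continuous continuous_const)
  have hbound : ‖f‖ ≤ (s - f x) / r := by
    refine ContinuousLinearMap.opNorm_bound_of_ball_bound hr _ f fun v hv => ?_
    have hv' : ‖v‖ ≤ r := mem_closedBall_zero_iff.mp hv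
    have hplus := hclosed (x + v) (by simpa [mem_closedBall, dist_eq_norm] using hv')
    have hminus := hclosed (x - v) (by simpa [mem_closedBall, dist_eq_norm] using hv')
    rw [map_add] at hplus
    rw [map_sub] at hminus
    rw [Real.norm_eq_abs, abs_le]
    constructor <;> linarith
  have := (le_div_iff₀ hr).mp hbound
  linarith

lemma Convex.exists_norming_dual_of_norm_sub_eq_infDist {C : Set E} (hC : Convex ℝ C)
    {x y : E} (hy : y ∈ C) (hxy : 0 < ‖x - y‖) (hd : ‖x - y‖ = infDist x C) :
    ∃ g : StrongDual ℝ E, g ≠ 0 ∧ g (x - y) = ‖x - y‖ * ‖g‖ ∧ ∀ z ∈ C, 0 ≤ g (y - z) := by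
  have hdisj : Disjoint (ball x ‖x - y‖) C := hd ▸ disjoint_ball_infDist
  obtain ⟨f, s, hball, hsep⟩ := geometric_hahn_banach_open (convex_ball x _) isOpen_ball hC hdisj
  have hlow := f.apply_add_norm_mul_le_of_forall_mem_ball_lt hxy hball
  have hup : f (y - x) ≤ ‖f‖ * ‖x - y‖ := by
    simpa [← norm_neg (x - y)] using (le_abs_self _).trans (f.le_opNorm (y - x))
  -- `f x + ‖f‖ * ‖x - y‖ ≤ s ≤ f y ≤ f x + ‖f‖ * ‖x - y‖`, so all of these are equal.
  have hfy : f y = s := by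
    have := hsep y hy
    rw [map_sub] at hup
    linarith
  refine ⟨-f, fun h => ?_, ?_, fun z hz => ?_⟩
  · have := hball x (mem_ball_self hxy)
    simp [neg_eq_zero.mp h] at this hfy
    linarith
  · rw [norm_neg, neg_apply, ← map_neg, neg_sub]
    rw [map_sub] at hup ⊢
    linarith
  · have := hsep z hz
    rw [neg_apply, map_sub]
    linarith

lemma norm_le_norm_add_of_norming_dual_apply_nonneg {f : StrongDual ℝ E} (hf : f ≠ 0)
    {u w : E} (hfu : f u = ‖u‖ * ‖f‖) (hw : 0 ≤ f w) : ‖u‖ ≤ ‖u + w‖ := by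
  have hfpos : 0 < ‖f‖ := norm_pos_iff.mpr hf
  have : ‖u‖ * ‖f‖ ≤ ‖u + w‖ * ‖f‖ :=
    calc ‖u‖ * ‖f‖ ≤ f (u + w) := by rw [map_add]; linarith
      _ ≤ ‖f‖ * ‖u + w‖ := (le_abs_self _).trans (f.le_opNorm _)
      _ = ‖u + w‖ * ‖f‖ := mul_comm _ _
  exact le_of_mul_le_mul_right this hfpos

lemma smul_mem_gaugeDualityMap {μ : ℝ → ℝ} {u : E} {g : StrongDual ℝ E} (hg : g ≠ 0)
    (hgu : g u = ‖u‖ * ‖g‖) (hμ : 0 ≤ μ ‖u‖) : (μ ‖u‖ / ‖g‖) • g ∈ gaugeDualityMap μ u := by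
  have hgpos : 0 < ‖g‖ := norm_pos_iff.mpr hg
  have hnorm : ‖(μ ‖u‖ / ‖g‖) • g‖ = μ ‖u‖ := by
    rw [norm_smul, Real.norm_eq_abs, abs_of_nonneg (by positivity), div_mul_cancel₀ _ hgpos.ne']
  refine ⟨?_, hnorm⟩
  rw [hnorm, smul_apply, hgu, smul_eq_mul]
  field_simp

end NormingFunctional

theorem stmt_13_general {E : Type*} [NormedAddCommGroup E] [NormedSpace ℝ E]
    (C : Set E) (hCv : Convex ℝ C)
    -- `μ` is a gauge function:
    (μ : ℝ → ℝ)
    (hμmono : StrictMonoOn μ (Set.Ici 0)) (hμ0 : μ 0 = 0)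
    -- `E` is smooth: the duality mapping `J_μ` is single-valued, given by `jμ`:
    (jμ : E → (E →L[ℝ] ℝ)) (hjμ : ∀ z : E, jμ z ∈ gaugeDualityMap μ z)
    (hjμuniq : ∀ z : E, ∀ f ∈ gaugeDualityMap μ z, f = jμ z)
    (x : E) (y : E) (hy : y ∈ C) :
    ‖x - y‖ = Metric.infDist x C ↔ ∀ z ∈ C, jμ (x - y) (y - z) ≥ 0 := by
  rcases eq_or_ne x y with rfl | hxy
  · have hj0 : jμ 0 = 0 := norm_eq_zero.mp (by simpa [hμ0] using (hjμ 0).2)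
    simp [infDist_zero_of_mem hy, hj0]
  have hxy' : 0 < ‖x - y‖ := norm_pos_iff.mpr (sub_ne_zero.mpr hxy)
  have hμpos : 0 < μ ‖x - y‖ := hμ0 ▸ hμmono Set.self_mem_Ici hxy'.le hxy'
  constructor
  · intro hd z hz
    obtain ⟨g, hg0, hgu, hgC⟩ := hCv.exists_norming_dual_of_norm_sub_eq_infDist hy hxy' hd
    rw [← hjμuniq _ _ (smul_mem_gaugeDualityMap hg0 hgu hμpos.le)]
    exact mul_nonneg (by positivity) (hgC z hz)
  · intro H
    have hj0 : jμ (x - y) ≠ 0 := norm_ne_zero_iff.mp ((hjμ _).2 ▸ hμpos.ne')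
    refine le_antisymm ((le_infDist ⟨y, hy⟩).mpr fun z hz => ?_) (dist_eq_norm x y ▸ infDist_le_dist_of_mem hy)
    simpa [dist_eq_norm] using norm_le_norm_add_of_norming_dual_apply_nonneg hj0 (hjμ _).1 (H z hz)

theorem stmt_13 {E : Type*} [NormedAddCommGroup E] [NormedSpace ℝ E] [CompleteSpace E]
    (C : Set E) (hC : C.Nonempty) (hCv : Convex ℝ C)
    -- `μ` is a gauge function:
    (μ : ℝ → ℝ) (hμcont : ContinuousOn μ (Set.Ici 0))
    (hμmono : StrictMonoOn μ (Set.Ici 0)) (hμ0 : μ 0 = 0)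
    (hμtop : Filter.Tendsto μ Filter.atTop Filter.atTop)
    -- `E` is smooth: the duality mapping `J_μ` is single-valued, given by `jμ`:
    (jμ : E → (E →L[ℝ] ℝ)) (hjμ : ∀ z : E, jμ z ∈ gaugeDualityMap μ z)
    (hjμuniq : ∀ z : E, ∀ f ∈ gaugeDualityMap μ z, f = jμ z)
    (x : E) (y : E) (hy : y ∈ C) :
    ‖x - y‖ = Metric.infDist x C ↔ ∀ z ∈ C, jμ (x - y) (y - z) ≥ 0 :=
  stmt_13_general C hCv μ hμmono hμ0 jμ hjμ hjμuniq x y hy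
end

section
/- Every nonempty closed convex subset of a reflexive strictly convex real Banach space is a Chebyshev set: each point of the space has a unique nearest point in the subset. -/
/-!
Reflexivity makes bounded sets weakly relatively compact (Banach–Alaoglu in the bidual), closed
convex sets are weakly closed, and the norm is weakly lower semicontinuous; hence `‖x - ·‖`
attains its minimum on the weakly compact set `C ∩ closedBall x (infDist x C + 1)`, and the
minimiser is nearest in all of `C` since the other points of `C` lie farther away. By strict
convexity, the midpoint of two distinct nearest points would be strictly closer to `x`.
-/

open Metric Set NormedSpace

section WeakTopology

variable {𝕜 E : Type*} [RCLike 𝕜] [NormedAddCommGroup E] [NormedSpace 𝕜 E]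

theorem Convex.isClosed_toWeakSpace_image [NormedSpace ℝ E] [IsScalarTower ℝ 𝕜 E] {s : Set E}
    (hs : Convex ℝ s) (hsc : IsClosed s) : IsClosed (toWeakSpace 𝕜 E '' s) := by
  rw [← closure_eq_iff_isClosed, ← hs.toWeakSpace_closure 𝕜, hsc.closure_eq]

theorem range_inclusionInDoubleDualWeak_eq_univ
    (hrefl : Function.Surjective (inclusionInDoubleDual 𝕜 E)) :
    range (inclusionInDoubleDualWeak 𝕜 E) = univ :=
  eq_univ_of_forall fun φ ↦
    let ⟨x, hx⟩ := hrefl (WeakDual.toStrongDual φ)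
    ⟨toWeakSpace 𝕜 E x, congrArg StrongDual.toWeakDual hx⟩

theorem isCompact_closure_toWeakSpace_image_of_isBounded
    (hrefl : Function.Surjective (inclusionInDoubleDual 𝕜 E)) {s : Set E} (hs : Bornology.IsBounded s) :
    IsCompact (closure (toWeakSpace 𝕜 E '' s)) := by
  refine isCompact_closure_of_isBounded 𝕜 E _ ?_ ?_
  · rwa [preimage_image_eq s (toWeakSpace 𝕜 E).injective]
  · simp [range_inclusionInDoubleDualWeak_eq_univ hrefl]

end WeakTopology

section NearestPoint

variable {E : Type*} [NormedAddCommGroup E] [NormedSpace ℝ E]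

theorem isCompact_toWeakSpace_image_of_isBounded_of_isClosed_of_convex
    (hrefl : Function.Surjective (inclusionInDoubleDual ℝ E)) {s : Set E}
    (hsb : Bornology.IsBounded s) (hsc : IsClosed s) (hsv : Convex ℝ s) :
    IsCompact (toWeakSpace ℝ E '' s) := by
  simpa only [(hsv.isClosed_toWeakSpace_image hsc).closure_eq]
    using isCompact_closure_toWeakSpace_image_of_isBounded hrefl hsb

theorem lowerSemicontinuous_norm_sub_toWeakSpace_symm (x : E) :
    LowerSemicontinuous fun w : WeakSpace ℝ E ↦ ‖x - (toWeakSpace ℝ E).symm w‖ := by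
  refine lowerSemicontinuous_iff_isClosed_preimage.2 fun r ↦ ?_
  have : (fun w : WeakSpace ℝ E ↦ ‖x - (toWeakSpace ℝ E).symm w‖) ⁻¹' Iic r =
      toWeakSpace ℝ E '' closedBall x r := by
    ext w
    simp [LinearEquiv.image_eq_preimage_symm, dist_eq_norm, norm_sub_rev]
  rw [this]
  exact (convex_closedBall x r).isClosed_toWeakSpace_image isClosed_closedBall

theorem exists_norm_sub_eq_infDist_of_surjective_inclusionInDoubleDual
    (hrefl : Function.Surjective (inclusionInDoubleDual ℝ E)) {C : Set E} (hC : C.Nonempty)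
    (hCc : IsClosed C) (hCv : Convex ℝ C) (x : E) :
    ∃ y ∈ C, ‖x - y‖ = infDist x C := by
  set K := C ∩ closedBall x (infDist x C + 1)
  have hK_ne : K.Nonempty := by
    obtain ⟨y, hyC, hy⟩ := (infDist_lt_iff hC).1 (lt_add_one (infDist x C))
    exact ⟨y, hyC, mem_closedBall'.2 hy.le⟩
  have hK : IsCompact (toWeakSpace ℝ E '' K) :=
    isCompact_toWeakSpace_image_of_isBounded_of_isClosed_of_convex hrefl
      (isBounded_closedBall.subset inter_subset_right) (hCc.inter isClosed_closedBall)
      (hCv.inter (convex_closedBall _ _))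
  obtain ⟨_, ⟨y, hyK, rfl⟩, hmin⟩ := LowerSemicontinuousOn.exists_isMinOn (hK_ne.image _) hK
    ((lowerSemicontinuous_norm_sub_toWeakSpace_symm x).lowerSemicontinuousOn _)
  refine ⟨y, hyK.1, le_antisymm ((le_infDist hC).2 fun z hzC ↦ ?_)
    (dist_eq_norm x y ▸ infDist_le_dist_of_mem hyK.1)⟩
  rw [dist_eq_norm]
  by_cases hz : z ∈ closedBall x (infDist x C + 1)
  · simpa using hmin (mem_image_of_mem _ ⟨hzC, hz⟩)
  · rw [mem_closedBall', not_le, dist_eq_norm] at hz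
    rw [← dist_eq_norm]
    exact (mem_closedBall'.1 hyK.2).trans hz.le

theorem Convex.eq_of_norm_sub_eq_infDist [StrictConvexSpace ℝ E] {C : Set E} (hCv : Convex ℝ C)
    {x y z : E} (hy : y ∈ C) (hz : z ∈ C) (hxy : ‖x - y‖ = infDist x C)
    (hxz : ‖x - z‖ = infDist x C) : y = z := by
  by_contra hne
  have hmid : (1 / 2 : ℝ) • (y + z) ∈ C := by
    simpa [smul_add] using hCv hy hz (by norm_num : (0 : ℝ) ≤ 1 / 2)
      (by norm_num : (0 : ℝ) ≤ 1 / 2) (by norm_num)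
  have hlt : ‖x - (1 / 2 : ℝ) • (y + z)‖ < infDist x C := by
    have key : x - (1 / 2 : ℝ) • (y + z) = (1 / 2 : ℝ) • ((x - y) + (x - z)) := by module
    rw [key, ← hxy]
    exact (norm_midpoint_lt_iff (hxy.trans hxz.symm)).2 fun h ↦ hne (sub_right_injective h)
  exact hlt.not_ge (dist_eq_norm x _ ▸ infDist_le_dist_of_mem hmid)

end NearestPoint

theorem stmt_14_general {E : Type*} [NormedAddCommGroup E] [NormedSpace ℝ E]
    [StrictConvexSpace ℝ E]
    (hrefl : Function.Surjective (NormedSpace.inclusionInDoubleDual ℝ E))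
    (C : Set E) (hC : C.Nonempty) (hCc : IsClosed C) (hCv : Convex ℝ C) :
    ∀ x : E, ∃! y : E, y ∈ C ∧ ‖x - y‖ = Metric.infDist x C := by
  intro x
  obtain ⟨y, hyC, hy⟩ :=
    exists_norm_sub_eq_infDist_of_surjective_inclusionInDoubleDual hrefl hC hCc hCv x
  exact ⟨y, ⟨hyC, hy⟩, fun z ⟨hzC, hz⟩ ↦ hCv.eq_of_norm_sub_eq_infDist hzC hyC hz hy⟩

/-- Every nonempty closed convex subset of a reflexive strictly convex real Banach
space is a Chebyshev set. Reflexivity is expressed by surjectivity of the canonical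
embedding into the double dual. -/
theorem stmt_14 {E : Type*} [NormedAddCommGroup E] [NormedSpace ℝ E] [CompleteSpace E]
    [StrictConvexSpace ℝ E]
    (hrefl : Function.Surjective (NormedSpace.inclusionInDoubleDual ℝ E))
    (C : Set E) (hC : C.Nonempty) (hCc : IsClosed C) (hCv : Convex ℝ C) :
    ∀ x : E, ∃! y : E, y ∈ C ∧ ‖x - y‖ = Metric.infDist x C :=
  stmt_14_general hrefl C hC hCc hCv
end
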